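/- Let c ∈ ℝ and let φ : ℝ → ℝ be continuously differentiable, 2π-periodic, even, nonconstant, and nondecreasing on the interval (−π, 0). Assume that for all x ∈ (−π, 0), φ'(x)·(φ(x) − c) = (1/(2π))·∫_{−π}^{0} (log|sin((x−y)/2)| − log|sin((x+y)/2)|)·φ'(y) dy. Then for all x ∈ (−π, 0) one has φ'(x) > 0 and φ(x) < c. -/

import Mathlib

/-!
Monotonicity gives `φ' ≥ 0` on `(−π, 0)`, and `φ'` cannot vanish identically there: being odd and
`2π`-periodic it would then vanish everywhere, making `φ` constant. For `x ≠ y` in `(−π, 0)`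
the kernel `log|sin((x−y)/2)| − log|sin((x+y)/2)|` is negative, so the right-hand side of the
equation is strictly negative (the logarithmic singularity at `y = x` is integrable). Hence
`φ'(x) (φ(x) − c) < 0`, which forces `φ'(x) > 0` and `φ(x) < c`.
-/

open Set MeasureTheory Real

noncomputable def waveKernel (x y : ℝ) : ℝ :=
  log |sin ((x - y) / 2)| - log |sin ((x + y) / 2)|

lemma Function.Even.deriv {𝕜 F : Type*} [NontriviallyNormedField 𝕜] [NormedAddCommGroup F]
    [NormedSpace 𝕜 F] {f : 𝕜 → F} (hf : f.Even) : (deriv f).Odd := fun x => by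
  simpa [funext hf] using deriv_comp_neg f (-x)

lemma Function.Periodic.deriv {𝕜 F : Type*} [NontriviallyNormedField 𝕜] [NormedAddCommGroup F]
    [NormedSpace 𝕜 F] {f : 𝕜 → F} {c : 𝕜} (hf : f.Periodic c) : (deriv f).Periodic c := fun x => by
  simpa [funext hf] using (deriv_comp_add_const f c x).symm

lemma Function.Periodic.eq_zero_of_odd_of_eqOn_Ioo {g : ℝ → ℝ} {T : ℝ} (hT : 0 < T)
    (hper : g.Periodic (2 * T)) (hodd : g.Odd) (hzero : EqOn g 0 (Ioo (-T) 0)) : g = 0 := by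
  have h0 : g 0 = 0 := by
    have := hodd 0
    rw [neg_zero] at this
    linarith
  have hnegT : g (-T) = 0 := by
    have := hper (-T)
    rw [show -T + 2 * T = T by ring, ← neg_neg T, hodd (-T), neg_neg] at this
    linarith
  have hIco : ∀ y ∈ Ico (-T) T, g y = 0 := by
    rintro y ⟨h1, h2⟩
    rcases lt_trichotomy y 0 with hy | rfl | hy
    · rcases h1.eq_or_lt with rfl | h1
      · exact hnegT
      · exact hzero ⟨h1, hy⟩
    · exact h0
    · rw [← neg_neg y, hodd, hzero ⟨neg_lt_neg h2, neg_neg_of_pos hy⟩, Pi.zero_apply, neg_zero]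
  funext y
  obtain ⟨y', hy', hyy'⟩ := hper.exists_mem_Ico (by positivity) y (-T)
  rw [hyy', Pi.zero_apply]
  exact hIco y' (by rwa [show -T + 2 * T = T by ring] at hy')

lemma intervalIntegrable_waveKernel_mul (x : ℝ) {g : ℝ → ℝ} (hg : Continuous g) (a b : ℝ) :
    IntervalIntegrable (fun y => waveKernel x y * g y) volume a b := by
  have hlog : ∀ f : ℝ → ℝ, AnalyticOnNhd ℝ f univ →
      IntervalIntegrable (fun y => log |f y|) volume a b := fun f hf =>
    (hf.mono (subset_univ _)).meromorphicOn.intervalIntegrable_log_norm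
  refine ((hlog _ ?_).sub (hlog _ ?_)).mul_continuousOn hg.continuousOn <;>
  exact fun y _ => by fun_prop

lemma waveKernel_neg {x y : ℝ} (hx : x ∈ Ioo (-π) 0) (hy : y ∈ Ioo (-π) 0) (hxy : y ≠ x) :
    waveKernel x y < 0 := by
  have hsx := sin_neg_of_neg_of_neg_pi_lt hx.2 hx.1
  have hsy := sin_neg_of_neg_of_neg_pi_lt hy.2 hy.1
  have hpos : 0 < |sin ((x - y) / 2)| := by
    rw [abs_pos, Ne, sin_eq_zero_iff_of_lt_of_lt (by linarith [hx.1, hy.2, pi_pos])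
      (by linarith [hx.2, hy.1, pi_pos])]
    intro h
    exact hxy (by linarith)
  have hlt : |sin ((x - y) / 2)| < |sin ((x + y) / 2)| := by
    -- `sin² ((x + y) / 2) - sin² ((x - y) / 2) = sin x * sin y`
    rw [← sq_lt_sq, sin_sq_eq_half_sub, sin_sq_eq_half_sub, mul_div_cancel₀ _ two_ne_zero,
      mul_div_cancel₀ _ two_ne_zero, cos_sub, cos_add]
    nlinarith [mul_pos_of_neg_of_neg hsx hsy]
  exact sub_neg.2 (log_lt_log hpos hlt)

lemma integral_waveKernel_mul_neg {g : ℝ → ℝ} (hg : Continuous g)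
    (hnn : ∀ y ∈ Ioo (-π) 0, 0 ≤ g y) (hpos : ∃ y ∈ Ioo (-π) 0, 0 < g y)
    {x : ℝ} (hx : x ∈ Ioo (-π) 0) :
    ∫ y in (-π)..0, waveKernel x y * g y < 0 := by
  set U := Ioo (-π) 0 ∩ g ⁻¹' Ioi 0
  have hU : 0 < volume U := (isOpen_Ioo.inter (isOpen_Ioi.preimage hg)).measure_pos _ hpos
  have hUsupp : U \ {x} ⊆ Function.support (fun y => -(waveKernel x y * g y)) ∩ Ioc (-π) 0 :=
    fun y ⟨⟨hy, hgy⟩, hyx⟩ =>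
      ⟨neg_ne_zero.2 (mul_neg_of_neg_of_pos (waveKernel_neg hx hy hyx) hgy).ne,
        Ioo_subset_Ioc_self hy⟩
  rw [← neg_pos, ← intervalIntegral.integral_neg]
  refine (intervalIntegral.integral_pos_iff_support_of_nonneg_ae' ?_
    (intervalIntegrable_waveKernel_mul x hg _ _).neg).2 ⟨by linarith [pi_pos], ?_⟩
  · rw [uIoc_of_le (by linarith [pi_pos]), Filter.EventuallyLE, ae_restrict_iff' measurableSet_Ioc]
    filter_upwards [Measure.ae_ne volume x, Measure.ae_ne volume 0] with y hyx hy0 hy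
    have hy' : y ∈ Ioo (-π) 0 := ⟨hy.1, hy.2.lt_of_ne hy0⟩
    exact neg_nonneg.2 (mul_nonpos_of_nonpos_of_nonneg (waveKernel_neg hx hy' hyx).le (hnn y hy'))
  · calc 0 < volume U := hU
      _ = volume (U \ {x}) := (measure_sdiff_null (measure_singleton x)).symm
      _ ≤ _ := measure_mono hUsupp

theorem stmt_1 (c : ℝ) (φ : ℝ → ℝ)
    (hC1 : ContDiff ℝ 1 φ)
    (hper : ∀ x, φ (x + 2 * Real.pi) = φ x)
    (heven : ∀ x, φ (-x) = φ x)
    (hnonconst : ∃ a b, φ a ≠ φ b)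
    (hmono : MonotoneOn φ (Ioo (-Real.pi) 0))
    (heq : ∀ x ∈ Ioo (-Real.pi) 0,
      deriv φ x * (φ x - c) =
        (1 / (2 * Real.pi)) * ∫ y in (-Real.pi)..0,
          (Real.log |Real.sin ((x - y) / 2)| - Real.log |Real.sin ((x + y) / 2)|) * deriv φ y) :
    ∀ x ∈ Ioo (-Real.pi) 0, 0 < deriv φ x ∧ φ x < c := by
  have hnn : ∀ y ∈ Ioo (-π) 0, 0 ≤ deriv φ y := fun y hy => by
    rw [← derivWithin_of_isOpen isOpen_Ioo hy]
    exact hmono.derivWithin_nonneg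
  have hpos : ∃ y ∈ Ioo (-π) 0, 0 < deriv φ y := by
    by_contra! h
    have hzero : deriv φ = 0 := Function.Periodic.eq_zero_of_odd_of_eqOn_Ioo pi_pos
      (Function.Periodic.deriv hper) (Function.Even.deriv heven)
      fun y hy => le_antisymm (h y hy) (hnn y hy)
    obtain ⟨a, b, hab⟩ := hnonconst
    exact hab (is_const_of_deriv_eq_zero (hC1.differentiable one_ne_zero) (congrFun hzero) a b)
  intro x hx
  have hneg : deriv φ x * (φ x - c) < 0 := by
    rw [heq x hx]
    exact mul_neg_of_pos_of_neg (by positivity)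
      (integral_waveKernel_mul_neg (hC1.continuous_deriv le_rfl) hnn hpos hx)
  have hφ' : 0 < deriv φ x := (hnn x hx).lt_of_ne fun h => by simp [← h] at hneg
  exact ⟨hφ', by nlinarith⟩
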